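/- Define σ_S(p,q) = σ_{Π₁}(p,q) - (1/(p⁰+1)) (p×q)⊗(p₃,p₂,p₁)ᵀ, where σ_{Π₁} is the matrix with rows [q⁰p₂-p⁰q₂, -(q⁰p₃-p⁰q₃), 0], [-(q⁰p₁-p⁰q₁), 0, q⁰p₃-p⁰q₃], [0, q⁰p₁-p⁰q₁, -(q⁰p₂-p⁰q₂)]. Then σ_S σ_Sᵀ = S, where S is the matrix with entries S^{ij} = ρτ δ_{ij} - (p_i-q_i)(p_j-q_j) + ρ(p_i q_j + p_j q_i), ρ = p⁰q⁰ - p·q - 1, τ = ρ + 2. -/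

import Mathlib

noncomputable section
open Matrix MeasureTheory

abbrev E3 := EuclideanSpace ℝ (Fin 3)

/-- the energy p⁰ = √(1+|p|²) -/
def en (p : E3) : ℝ := Real.sqrt (1 + ‖p‖^2)

/-- the cross product p × q -/
def cross3 (p q : E3) : E3 :=
  (WithLp.equiv 2 (Fin 3 → ℝ)).symm
    ![p 1 * q 2 - p 2 * q 1, p 2 * q 0 - p 0 * q 2, p 0 * q 1 - p 1 * q 0]

/-- the relative momentum ρ(p,q) = p⁰q⁰ - p·q - 1 -/
def rel (p q : E3) : ℝ := en p * en q - (inner ℝ p q : ℝ) - 1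

/-- the matrix σ_{Π₁}(p,q) -/
def sigmaPi1 (p q : E3) : Matrix (Fin 3) (Fin 3) ℝ :=
  !![en q * p 1 - en p * q 1, -(en q * p 2 - en p * q 2), 0;
     -(en q * p 0 - en p * q 0), 0, en q * p 2 - en p * q 2;
     0, en q * p 0 - en p * q 0, -(en q * p 1 - en p * q 1)]

/-- the matrix S(p,q) -/
def Smat (p q : E3) : Matrix (Fin 3) (Fin 3) ℝ :=
  Matrix.of fun i j =>
    rel p q * (rel p q + 2) * (if i = j then 1 else 0)
      - (p i - q i) * (p j - q j) + rel p q * (p i * q j + p j * q i)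

/-- the matrix σ_S(p,q) -/
def sigmaS (p q : E3) : Matrix (Fin 3) (Fin 3) ℝ :=
  sigmaPi1 p q - (1 / (en p + 1)) • vecMulVec (cross3 p q) ![p 2, p 1, p 0]

/-!
`σ_{Π₁}(p,q)` is the cross-product matrix of `v = q⁰p - p⁰q` with its columns reversed. Hence
`σ_{Π₁} σ_{Π₁}ᵀ = |v|² I - v vᵀ`, and `σ_{Π₁}` maps the reversed `p` to `v × p = p⁰ (p × q)`.
Expanding the square of the rank-one correction, the cross terms and the quadratic term combine
to `-(p × q)(p × q)ᵀ` because `2p⁰/(p⁰+1) - |p|²/(p⁰+1)² = 1` on the mass shell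
`(p⁰)² = 1 + |p|²`. The remaining identity `|v|² I - v vᵀ - (p × q)(p × q)ᵀ = S` follows from
the Lagrange identity for `(p × q)(p × q)ᵀ` and the mass-shell relations for `p` and `q`.
-/

section OuterProduct

variable {n R : Type*} [Fintype n] [CommRing R]

theorem Matrix.sub_smul_vecMulVec_mul_transpose {A : Matrix n n R} {c w : n → R} {s : R}
    (hA : A *ᵥ w = s • c) (t : R) :
    (A - t • vecMulVec c w) * (A - t • vecMulVec c w)ᵀ =
      A * Aᵀ - (2 * t * s - t ^ 2 * (w ⬝ᵥ w)) • vecMulVec c c := by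
  have hA' : w ᵥ* Aᵀ = s • c := by rw [vecMul_transpose, hA]
  simp only [transpose_sub, transpose_smul, transpose_vecMulVec, sub_mul, mul_sub, smul_mul,
    Matrix.mul_smul, vecMulVec_mul_vecMulVec]
  simp only [mul_vecMulVec, vecMulVec_mul, hA, hA', smul_vecMulVec, vecMulVec_smul]
  module

end OuterProduct

section CrossProduct

variable {R : Type*} [CommRing R]

/-- The matrix of `crossProduct v` with its columns in reverse order. -/
def revCrossMatrix (v : Fin 3 → R) : Matrix (Fin 3) (Fin 3) R :=
  !![v 1, -v 2, 0; -v 0, 0, v 2; 0, v 0, -v 1]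

theorem revCrossMatrix_mulVec (v a : Fin 3 → R) :
    revCrossMatrix v *ᵥ ![a 2, a 1, a 0] = v ⨯₃ a := by
  ext i
  fin_cases i <;> simp [revCrossMatrix, cross_apply, mulVec] <;> ring

theorem revCrossMatrix_mul_transpose (v : Fin 3 → R) :
    revCrossMatrix v * (revCrossMatrix v)ᵀ = (v ⬝ᵥ v) • 1 - vecMulVec v v := by
  ext i j
  fin_cases i <;> fin_cases j <;>
    simp [revCrossMatrix, mul_apply, Fin.sum_univ_three, vec3_dotProduct, vecMulVec_apply] <;> ring

theorem vecMulVec_cross_self (u v : Fin 3 → R) :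
    vecMulVec (u ⨯₃ v) (u ⨯₃ v) =
      ((u ⬝ᵥ u) * (v ⬝ᵥ v) - (u ⬝ᵥ v) ^ 2) • 1 - ((v ⬝ᵥ v) • vecMulVec u u
        + (u ⬝ᵥ u) • vecMulVec v v - (u ⬝ᵥ v) • (vecMulVec u v + vecMulVec v u)) := by
  ext i j
  fin_cases i <;> fin_cases j <;>
    simp [cross_apply, vec3_dotProduct, vecMulVec_apply, one_apply] <;> ring

end CrossProduct

theorem EuclideanSpace.real_inner_eq_dotProduct {ι : Type*} [Fintype ι]
    (x y : EuclideanSpace ℝ ι) : inner ℝ x y = x.ofLp ⬝ᵥ y.ofLp := by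
  rw [EuclideanSpace.inner_eq_star_dotProduct, star_trivial, dotProduct_comm]

section Kinematics

theorem en_sq (p : E3) : en p ^ 2 = 1 + p.ofLp ⬝ᵥ p.ofLp := by
  rw [en, Real.sq_sqrt (by positivity), ← real_inner_self_eq_norm_sq,
    EuclideanSpace.real_inner_eq_dotProduct]

theorem cross3_ofLp (p q : E3) : (cross3 p q).ofLp = p.ofLp ⨯₃ q.ofLp := rfl

theorem sigmaPi1_eq_revCrossMatrix (p q : E3) :
    sigmaPi1 p q = revCrossMatrix (en q • p.ofLp - en p • q.ofLp) := by
  ext i j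
  fin_cases i <;> fin_cases j <;> simp [sigmaPi1, revCrossMatrix]

theorem sigmaPi1_mulVec (p q : E3) :
    sigmaPi1 p q *ᵥ ![p 2, p 1, p 0] = en p • (cross3 p q).ofLp := by
  rw [sigmaPi1_eq_revCrossMatrix, revCrossMatrix_mulVec, cross3_ofLp, map_sub, map_smul,
    map_smul, LinearMap.sub_apply, LinearMap.smul_apply, LinearMap.smul_apply, cross_self,
    smul_zero, zero_sub, ← smul_neg, cross_anticomm]

theorem sigmaPi1_mul_transpose_sub_vecMulVec_cross3 (p q : E3) :
    sigmaPi1 p q * (sigmaPi1 p q)ᵀ - vecMulVec (cross3 p q).ofLp (cross3 p q).ofLp = Smat p q := by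
  rw [sigmaPi1_eq_revCrossMatrix, revCrossMatrix_mul_transpose, cross3_ofLp, vecMulVec_cross_self]
  ext i j
  simp only [Smat, rel, EuclideanSpace.real_inner_eq_dotProduct, of_apply, Matrix.sub_apply,
    Matrix.add_apply, Matrix.smul_apply, one_apply, vecMulVec_apply, Pi.sub_apply, Pi.smul_apply,
    smul_eq_mul, dotProduct_sub, sub_dotProduct, dotProduct_smul, smul_dotProduct]
  rw [dotProduct_comm q.ofLp p.ofLp]
  linear_combination
    (-(if i = j then 1 else 0) * (en q ^ 2 - q.ofLp ⬝ᵥ q.ofLp) - q i * q j) * en_sq p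
      + (-(if i = j then 1 else 0) - p i * p j) * en_sq q

end Kinematics

theorem sigmaS_sq (p q : E3) : sigmaS p q * (sigmaS p q)ᵀ = Smat p q := by
  have hen : en p + 1 ≠ 0 := (add_pos_of_nonneg_of_pos (Real.sqrt_nonneg _) one_pos).ne'
  have hrev : ![p 2, p 1, p 0] ⬝ᵥ ![p 2, p 1, p 0] = en p ^ 2 - 1 := by
    rw [en_sq, vec3_dotProduct, vec3_dotProduct]
    simp only [cons_val_zero, cons_val_one, cons_val]
    ring
  have hcoeff : 2 * (1 / (en p + 1)) * en p - (1 / (en p + 1)) ^ 2 * (en p ^ 2 - 1) = 1 := by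
    field_simp; ring
  rw [sigmaS, sub_smul_vecMulVec_mul_transpose (sigmaPi1_mulVec p q), hrev, hcoeff, one_smul,
    sigmaPi1_mul_transpose_sub_vecMulVec_cross3]
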